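/- If G is a bipartite 2-connected graph, then pc(G) = 2, and moreover there exists a 2-edge-coloring c of G such that G has the strong property under c. -/

import Mathlib

/-!
A 2-connected graph is connected and bridgeless, so by Robbins' theorem it has a strongly connected
orientation: starting from a single vertex, a strongly connected vertex set `T ≠ V` can always be
enlarged by an ear, a trail leaving `T` along a boundary edge and returning to `T` without using
that edge (which is not a bridge), oriented from start to end.

Given a proper 2-colouring `β` of the vertices, colour every oriented edge with the colour of its
tail. Along a directed walk consecutive tails are adjacent, so consecutive edges get different
colours; a directed `u`-`v` path starts with colour `β u` and ends with colour `≠ β v`. Hence a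
directed `u`-`v` path and the reverse of a directed `v`-`u` path differ both in their first and in
their last colour. Finally `pc G ≥ 2`: with a single colour proper paths have at most one edge, so
`G` would be complete, which a bipartite graph on at least three vertices is not.
-/

open SimpleGraph

variable {V : Type*}

/-- A walk is proper w.r.t. an edge-coloring if consecutive edges get distinct colors. -/
def IsProperWalk {α : Type*} {G : SimpleGraph V} (c : Sym2 V → α) {u v : V} (p : G.Walk u v) : Prop :=
  p.edges.Chain' (fun e f => c e ≠ c f)

/-- An edge-coloring is a proper-path coloring if every pair of vertices is joined by a proper path. -/
def IsProperConnColoring {α : Type*} (G : SimpleGraph V) (c : Sym2 V → α) : Prop :=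
  ∀ u v : V, ∃ p : G.Walk u v, p.IsPath ∧ IsProperWalk c p

/-- The proper connection number. -/
noncomputable def pc (G : SimpleGraph V) : ℕ :=
  sInf {k | ∃ c : Sym2 V → Fin k, IsProperConnColoring G c}

/-- Strong property of an edge-coloring. -/
def HasStrongProp {α : Type*} (G : SimpleGraph V) (c : Sym2 V → α) : Prop :=
  IsProperConnColoring G c ∧
  ∀ u v : V, u ≠ v → ∃ p₁ p₂ : G.Walk u v, p₁.IsPath ∧ p₂.IsPath ∧
    IsProperWalk c p₁ ∧ IsProperWalk c p₂ ∧
    p₁.edges.head?.map c ≠ p₂.edges.head?.map c ∧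
    p₁.edges.getLast?.map c ≠ p₂.edges.getLast?.map c

/-- k-connectedness. -/
def KConnected (k : ℕ) (G : SimpleGraph V) [Fintype V] : Prop :=
  k < Fintype.card V ∧ ∀ S : Finset V, S.card < k → (G.induce ((↑S : Set V)ᶜ)).Connected

/-- edge chromatic number -/
noncomputable def edgeChromatic (G : SimpleGraph V) : ℕ :=
  sInf {k | ∃ c : Sym2 V → Fin k, ∀ e ∈ G.edgeSet, ∀ f ∈ G.edgeSet, e ≠ f →
    (∃ x, x ∈ e ∧ x ∈ f) → c e ≠ c f}

/-- rainbow connection number -/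
noncomputable def rc (G : SimpleGraph V) : ℕ :=
  sInf {k | ∃ c : Sym2 V → Fin k, ∀ u v : V, ∃ p : G.Walk u v, p.IsPath ∧ (p.edges.map c).Nodup}

lemma isProperWalk_iff {α : Type*} {G : SimpleGraph V} {c : Sym2 V → α} {u v : V}
    {p : G.Walk u v} : IsProperWalk c p ↔ p.edges.IsChain (fun e f => c e ≠ c f) :=
  Iff.rfl

lemma IsProperWalk.reverse {α : Type*} {G : SimpleGraph V} {c : Sym2 V → α} {u v : V}
    {p : G.Walk u v} (hp : IsProperWalk c p) : IsProperWalk c p.reverse := by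
  rw [isProperWalk_iff, Walk.edges_reverse, List.isChain_reverse]
  exact hp.imp fun _ _ h => h.symm

lemma IsProperWalk.adj_of_subsingleton {α : Type*} [Subsingleton α] {G : SimpleGraph V}
    {c : Sym2 V → α} {u v : V} {p : G.Walk u v} (hp : IsProperWalk c p) (huv : u ≠ v) :
    G.Adj u v := by
  cases p with
  | nil => exact absurd rfl huv
  | cons h q =>
    cases q with
    | nil => exact h
    | cons _ _ => exact absurd (Subsingleton.elim _ _) (List.isChain_cons_cons.mp hp).1

lemma not_isProperConnColoring_of_subsingleton {α : Type*} [Subsingleton α] {G : SimpleGraph V}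
    (c : Sym2 V → α) {u v : V} (huv : u ≠ v) (hadj : ¬G.Adj u v) :
    ¬IsProperConnColoring G c := fun hc =>
  let ⟨_, _, hp⟩ := hc u v
  hadj (hp.adj_of_subsingleton huv)

lemma pc_eq_two {G : SimpleGraph V} {c : Sym2 V → Fin 2} (hc : IsProperConnColoring G c)
    {u v : V} (huv : u ≠ v) (hadj : ¬G.Adj u v) : pc G = 2 := by
  refine IsLeast.csInf_eq ⟨⟨c, hc⟩, fun k ⟨c', hc'⟩ => ?_⟩
  by_contra! hk
  interval_cases k <;> exact not_isProperConnColoring_of_subsingleton c' huv hadj hc'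

lemma SimpleGraph.Colorable.exists_ne_not_adj [Fintype V] {G : SimpleGraph V} {n : ℕ}
    (hG : G.Colorable n) (hn : n < Fintype.card V) : ∃ u v, u ≠ v ∧ ¬G.Adj u v := by
  by_contra! h
  exact hG.cliqueFree hn Finset.univ ⟨fun x _ y _ hxy => h x y hxy, Finset.card_univ⟩

section KConnected

variable [Fintype V] {G : SimpleGraph V} {k : ℕ}

lemma KConnected.connected (h : KConnected k G) (hk : 0 < k) : G.Connected := by
  have hconn := h.2 ∅ (by simpa using hk)
  rw [Finset.coe_empty, Set.compl_empty] at hconn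
  exact (induceUnivIso G).connected_iff.mp hconn

lemma KConnected.exists_walk_avoiding (h : KConnected k G) (hk : 1 < k) {x u v : V}
    (hu : u ≠ x) (hv : v ≠ x) : ∃ p : G.Walk u v, x ∉ p.support := by
  have hconn := h.2 {x} (by simpa using hk)
  rw [Finset.coe_singleton] at hconn
  obtain ⟨p⟩ := hconn.preconnected ⟨u, hu⟩ ⟨v, hv⟩
  have hx : x ∉ (p.map (Embedding.induce _).toHom).support := by
    rw [Walk.support_map]
    simp
  exact ⟨_, hx⟩

lemma KConnected.not_isBridge (h : KConnected k G) (hk : 1 < k) :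
    ∀ e ∈ G.edgeSet, ¬G.IsBridge e := by
  classical
  rintro ⟨x, y⟩ hxy
  rw [isBridge_iff_forall_walk_mem_edges]
  push Not
  obtain ⟨t, -, ht⟩ := Finset.exists_mem_notMem_of_card_lt_card (s := {x, y})
    (t := Finset.univ) (Finset.card_le_two.trans_lt (by rw [Finset.card_univ]; have := h.1; omega))
  simp only [Finset.mem_insert, Finset.mem_singleton, not_or] at ht
  -- Go from `x` to a neighbour `p.snd ≠ y` inside `G - y`, then back to `y` inside `G - x`.
  obtain ⟨p, hp⟩ := h.exists_walk_avoiding hk (x := y) (u := x) (v := t) hxy.ne ht.2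
  have hpn : ¬p.Nil := Walk.not_nil_of_ne (Ne.symm ht.1)
  have hmy : p.snd ≠ y := fun hm => hp (hm ▸ p.getVert_mem_support 1)
  obtain ⟨q, hq⟩ := h.exists_walk_avoiding hk (x := x) (p.adj_snd hpn).ne.symm hxy.ne.symm
  refine ⟨.cons (p.adj_snd hpn) q, fun hmem => ?_⟩
  rcases List.mem_cons.mp hmem with he | he
  · exact hmy (Sym2.congr_right.mp he).symm
  · exact hq (q.fst_mem_support_of_mem_edges he)

end KConnected

namespace SimpleGraph

variable {G : SimpleGraph V} {R : V → V → Prop} {u v : V}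

namespace Walk

def IsDirected (R : V → V → Prop) (p : G.Walk u v) : Prop :=
  ∀ d ∈ p.darts, R d.fst d.snd

lemma IsDirected.reflTransGen {p : G.Walk u v} (hp : p.IsDirected R) :
    Relation.ReflTransGen R u v := by
  induction p with
  | nil => exact .refl
  | cons h q ih => exact .head (hp ⟨(_, _), h⟩ (by simp)) (ih fun d hd => hp d (by simp [hd]))

lemma exists_isPath_isDirected (hR : ∀ ⦃x y⦄, R x y → G.Adj x y)
    (h : Relation.ReflTransGen R u v) : ∃ p : G.Walk u v, p.IsPath ∧ p.IsDirected R := by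
  classical
  suffices ∃ p : G.Walk u v, p.IsDirected R from
    let ⟨p, hp⟩ := this
    ⟨p.bypass, p.bypass_isPath, fun d hd => hp d (p.darts_bypass_subset_darts hd)⟩
  induction h with
  | refl => exact ⟨nil, by simp [IsDirected]⟩
  | tail _ hbc ih =>
    obtain ⟨p, hp⟩ := ih
    refine ⟨p.concat (hR hbc), fun d hd => ?_⟩
    simp only [darts_concat, List.concat_eq_append, List.mem_append, List.mem_singleton] at hd
    rcases hd with hd | rfl
    exacts [hp d hd, hbc]

lemma IsTrail.symm_notMem_darts {p : G.Walk u v} (hp : p.IsTrail) {d : G.Dart}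
    (hd : d ∈ p.darts) : d.symm ∉ p.darts := fun hds =>
  d.symm_ne (List.inj_on_of_nodup_map hp.edges_nodup hds hd d.edge_symm)

lemma exists_isPath_to_set (S : Set V) (p : G.Walk u v) (hv : v ∈ S) :
    ∃ z ∈ S, ∃ q : G.Walk u z,
      q.IsPath ∧ (∀ d ∈ q.darts, d.fst ∉ S) ∧ q.edges ⊆ p.edges := by
  classical
  induction p with
  | nil => exact ⟨_, hv, nil, .nil, by simp, by simp⟩
  | @cons u m v h p ih =>
    by_cases hu : u ∈ S
    · exact ⟨u, hu, nil, .nil, by simp, by simp⟩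
    obtain ⟨z, hz, q, -, hqS, hqp⟩ := ih hv
    refine ⟨z, hz, (cons h q).bypass, bypass_isPath _, fun d hd => ?_,
      List.Subset.trans (edges_bypass_subset_edges _) (List.cons_subset_cons _ hqp)⟩
    rcases List.mem_cons.mp (darts_bypass_subset_darts _ hd) with rfl | hd
    exacts [hu, hqS d hd]

end Walk

open Walk

/-- An orientation of some edges of `G` is encoded as a relation inside `G.Adj` holding in at most
one direction per edge. -/
structure IsStrongOrientationOn (G : SimpleGraph V) (R : V → V → Prop) (T : Set V) : Prop where
  adj : ∀ ⦃x y⦄, R x y → G.Adj x y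
  asymm : ∀ ⦃x y⦄, R x y → ¬R y x
  mem : ∀ ⦃x y⦄, R x y → x ∈ T ∧ y ∈ T
  reach : ∀ x ∈ T, ∀ y ∈ T, Relation.ReflTransGen R x y

lemma isStrongOrientationOn_singleton (v : V) :
    G.IsStrongOrientationOn (fun _ _ => False) {v} where
  adj := fun _ _ h => h.elim
  asymm := fun _ _ h => h.elim
  mem := fun _ _ h => h.elim
  reach := by rintro x rfl y rfl; exact .refl

lemma IsStrongOrientationOn.addEar {T : Set V} (hR : G.IsStrongOrientationOn R T) {x z : V}
    (w : G.Walk x z) (hw : w.IsTrail) (hx : x ∈ T) (hz : z ∈ T)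
    (hwT : ∀ d ∈ w.darts, d.fst ∉ T ∨ d.snd ∉ T) :
    G.IsStrongOrientationOn (fun a b => R a b ∨ ∃ d ∈ w.darts, d.fst = a ∧ d.snd = b)
      (T ∪ {a | a ∈ w.support}) where
  adj := by
    rintro a b (hab | ⟨d, -, rfl, rfl⟩)
    exacts [hR.adj hab, d.adj]
  asymm := by
    rintro a b (hab | ⟨d, hd, rfl, rfl⟩) (hba | ⟨d', hd', h₁, h₂⟩)
    · exact hR.asymm hab hba
    · obtain ⟨haT, hbT⟩ := hR.mem hab
      subst h₁ h₂
      exact (hwT d' hd').elim (· hbT) (· haT)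
    · obtain ⟨hbT, haT⟩ := hR.mem hba
      exact (hwT d hd).elim (· haT) (· hbT)
    · have : d' = d.symm := Dart.ext _ _ (Prod.ext h₁ h₂)
      exact hw.symm_notMem_darts hd (this ▸ hd')
  mem := by
    rintro a b (hab | ⟨d, hd, rfl, rfl⟩)
    · exact ⟨Or.inl (hR.mem hab).1, Or.inl (hR.mem hab).2⟩
    · exact ⟨Or.inr (w.dart_fst_mem_support_of_mem_darts hd),
        Or.inr (w.dart_snd_mem_support_of_mem_darts hd)⟩
  reach := by
    classical
    set R' : V → V → Prop := fun a b => R a b ∨ ∃ d ∈ w.darts, d.fst = a ∧ d.snd = b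
    have hdir {a b : V} (q : G.Walk a b) (hq : q.darts ⊆ w.darts) :
        Relation.ReflTransGen R' a b :=
      IsDirected.reflTransGen fun d hd => Or.inr ⟨d, hq hd, rfl, rfl⟩
    have hold {a b : V} (ha : a ∈ T) (hb : b ∈ T) : Relation.ReflTransGen R' a b :=
      Relation.ReflTransGen.mono (fun _ _ => Or.inl) _ _ (hR.reach a ha b hb)
    suffices h : ∀ a ∈ T ∪ {a | a ∈ w.support},
        Relation.ReflTransGen R' x a ∧ Relation.ReflTransGen R' a x from
      fun a ha b hb => (h a ha).2.trans (h b hb).1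
    rintro a (ha | ha)
    · exact ⟨hold hx ha, hold ha hx⟩
    · exact ⟨hdir _ (w.darts_takeUntil_subset_darts ha),
        (hdir _ (w.darts_dropUntil_subset_darts ha)).trans (hold hz hx)⟩

lemma exists_ear (hconn : G.Connected) (hbr : ∀ e ∈ G.edgeSet, ¬G.IsBridge e) {T : Set V}
    (hT : T.Nonempty) (hTu : T ≠ Set.univ) :
    ∃ x z, ∃ w : G.Walk x z, w.IsTrail ∧ x ∈ T ∧ z ∈ T ∧
      (∀ d ∈ w.darts, d.fst ∉ T ∨ d.snd ∉ T) ∧ ∃ y ∈ w.support, y ∉ T := by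
  obtain ⟨t, ht⟩ := hT
  obtain ⟨s, hs⟩ := (Set.ne_univ_iff_exists_notMem T).mp hTu
  obtain ⟨d, -, hx, hy⟩ := (hconn t s).some.exists_boundary_dart T ht hs
  obtain ⟨p, hp⟩ : ∃ p : G.Walk d.snd d.fst, s(d.snd, d.fst) ∉ p.edges := by
    simpa [Dart.edge, isBridge_iff_forall_walk_mem_edges] using hbr _ d.symm.edge_mem
  obtain ⟨z, hz, q, hq, hqT, hqp⟩ := p.exists_isPath_to_set T hx
  refine ⟨d.fst, z, cons d.adj q, ?_, hx, hz, ?_, d.snd, by simp, hy⟩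
  · exact (isTrail_cons _ _).mpr ⟨hq.isTrail, fun h => hp (Sym2.eq_swap ▸ hqp h)⟩
  · rintro d' hd'
    rcases List.mem_cons.mp hd' with rfl | hd'
    exacts [Or.inr hy, Or.inl (hqT d' hd')]

theorem exists_isStrongOrientationOn_univ [Finite V] (hconn : G.Connected)
    (hbr : ∀ e ∈ G.edgeSet, ¬G.IsBridge e) : ∃ R, G.IsStrongOrientationOn R Set.univ := by
  obtain ⟨v⟩ := hconn.nonempty
  obtain ⟨T, ⟨hT, R, hR⟩, hmax⟩ :=
    (Set.toFinite {T : Set V | T.Nonempty ∧ ∃ R, G.IsStrongOrientationOn R T}).exists_maximal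
      ⟨{v}, Set.singleton_nonempty v, _, isStrongOrientationOn_singleton v⟩
  obtain rfl | hTu := eq_or_ne T Set.univ
  · exact ⟨R, hR⟩
  obtain ⟨x, z, w, hw, hx, hz, hwT, y, hy, hyT⟩ := exists_ear hconn hbr hT hTu
  exact absurd (hmax ⟨hT.mono Set.subset_union_left, _, hR.addEar w hw hx hz hwT⟩
    Set.subset_union_left (Or.inr hy)) hyT

open scoped Classical in
/-- The colour of the tail of an edge oriented by `R`; the case split makes the formula symmetric
without assuming `R` asymmetric. -/
noncomputable def tailColoring {α : Type*} [Inhabited α] (β : V → α) (R : V → V → Prop) :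
    Sym2 V → α :=
  Sym2.lift ⟨fun x y =>
    if R x y ∧ ¬R y x then β x else if R y x ∧ ¬R x y then β y else default,
    fun x y => by by_cases R x y <;> by_cases R y x <;> simp [*]⟩

section tailColoring

variable {α : Type*} [Inhabited α] {β : V → α}

lemma tailColoring_mk {x y : V} (h : R x y) (h' : ¬R y x) :
    tailColoring β R s(x, y) = β x := by
  simp [tailColoring, h, h']

namespace Walk

variable {p : G.Walk u v}

lemma IsDirected.tailColoring_edge (hR : ∀ ⦃x y⦄, R x y → ¬R y x) (hp : p.IsDirected R)
    {d : G.Dart} (hd : d ∈ p.darts) :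
    tailColoring β R d.edge = β d.fst :=
  tailColoring_mk (hp d hd) (hR (hp d hd))

lemma IsDirected.map_tailColoring_edges (hR : ∀ ⦃x y⦄, R x y → ¬R y x)
    (hp : p.IsDirected R) :
    p.edges.map (tailColoring β R) = p.support.dropLast.map β := by
  rw [← map_fst_darts, edges, List.map_map, List.map_map]
  exact List.map_congr_left fun d hd => hp.tailColoring_edge hR hd

lemma IsDirected.isProperWalk (hR : ∀ ⦃x y⦄, R x y → ¬R y x)
    (hβ : ∀ ⦃x y⦄, G.Adj x y → β x ≠ β y) (hp : p.IsDirected R) :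
    IsProperWalk (tailColoring β R) p := by
  rw [isProperWalk_iff, ← List.isChain_map, hp.map_tailColoring_edges hR, List.isChain_map]
  exact p.isChain_adj_support.dropLast.imp hβ

lemma IsDirected.head?_map_tailColoring (hR : ∀ ⦃x y⦄, R x y → ¬R y x)
    (hp : p.IsDirected R) (hnil : ¬p.Nil) :
    p.edges.head?.map (tailColoring β R) = some (β u) := by
  rw [List.head?_eq_some_head (edges_eq_nil.not.mpr hnil), head_edges_eq_mk_start_snd]
  exact congrArg some (hp.tailColoring_edge hR (p.firstDart_mem_darts hnil))

lemma IsDirected.getLast?_map_tailColoring (hR : ∀ ⦃x y⦄, R x y → ¬R y x)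
    (hp : p.IsDirected R) (hnil : ¬p.Nil) :
    p.edges.getLast?.map (tailColoring β R) = some (β p.penultimate) := by
  rw [List.getLast?_eq_some_getLast (edges_eq_nil.not.mpr hnil),
    getLast_edges_eq_mk_penultimate_end]
  exact congrArg some (hp.tailColoring_edge hR (p.lastDart_mem_darts hnil))

end Walk

theorem hasStrongProp_tailColoring (C : G.Coloring α)
    (hR : G.IsStrongOrientationOn R Set.univ) :
    HasStrongProp G (tailColoring C R) := by
  have hpath (u v : V) : ∃ p : G.Walk u v, p.IsPath ∧ p.IsDirected R :=
    exists_isPath_isDirected hR.adj (hR.reach u trivial v trivial)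
  have hproper {u v : V} {p : G.Walk u v} (hp : p.IsDirected R) :
      IsProperWalk (tailColoring C R) p :=
    hp.isProperWalk hR.asymm fun _ _ h => C.valid h
  refine ⟨fun u v => ?_, fun u v huv => ?_⟩
  · obtain ⟨p, hp, hpR⟩ := hpath u v
    exact ⟨p, hp, hproper hpR⟩
  obtain ⟨p, hp, hpR⟩ := hpath u v
  obtain ⟨q, hq, hqR⟩ := hpath v u
  have hpn : ¬p.Nil := not_nil_of_ne huv
  have hqn : ¬q.Nil := not_nil_of_ne huv.symm
  refine ⟨p, q.reverse, hp, hq.reverse, hproper hpR, (hproper hqR).reverse, ?_, ?_⟩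
  · rw [hpR.head?_map_tailColoring hR.asymm hpn, edges_reverse, List.head?_reverse,
      hqR.getLast?_map_tailColoring hR.asymm hqn]
    exact fun h => C.valid (q.adj_penultimate hqn) (Option.some_inj.mp h).symm
  · rw [edges_reverse, List.getLast?_reverse, hqR.head?_map_tailColoring hR.asymm hqn,
      hpR.getLast?_map_tailColoring hR.asymm hpn]
    exact fun h => C.valid (p.adj_penultimate hpn) (Option.some_inj.mp h)

end tailColoring

end SimpleGraph

theorem stmt_6 [Fintype V] (G : SimpleGraph V) (hbip : G.Colorable 2)
    (h2c : KConnected 2 G) :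
    pc G = 2 ∧ ∃ c : Sym2 V → Fin 2, HasStrongProp G c := by
  obtain ⟨u, v, huv, hadj⟩ := hbip.exists_ne_not_adj h2c.1
  obtain ⟨C⟩ := hbip
  obtain ⟨R, hR⟩ := exists_isStrongOrientationOn_univ (h2c.connected two_pos)
    (h2c.not_isBridge one_lt_two)
  have hc := hasStrongProp_tailColoring C hR
  exact ⟨pc_eq_two hc.1 huv hadj, _, hc⟩
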